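/- Let X be a compact complex manifold, ω₁ a positive (1,1)-form on X with i∂∂̄ω₁ = 0, and ω' a real (1,1)-form on X such that i∂∂̄ω' is a nonnegative (2,2)-form which is strictly positive outside a set of measure zero. Then ∫_X ω₁ ∧ i∂∂̄ω' > 0, while Stokes' theorem gives ∫_X ω₁ ∧ i∂∂̄ω' = ∫_X i∂∂̄ω₁ ∧ ω' = 0, a contradiction; hence no such pluriclosed metric ω₁ exists. -/
import Mathlib

/-- Nonexistence of pluriclosed metrics.  On a compact complex manifold `X`,
abstract the real vector spaces of real (1,1)-forms and (2,2)-forms as `Ω11`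
and `Ω22`, the operator `i∂∂̄ : Ω11 → Ω22` as a linear map, and the pairing
`(a, T) ↦ ∫_X a ∧ T` as a bilinear map `integralWedge`.  Assume Stokes'
theorem `∫ a ∧ i∂∂̄b = ∫ b ∧ i∂∂̄a` and that the integral of a positive
(1,1)-form against a nonnegative, a.e. strictly positive (2,2)-form is
positive.  If some real (1,1)-form `ω'` has `i∂∂̄ω'` nonnegative and strictly
positive outside a set of measure zero, then there is no pluriclosed metric:
no positive (1,1)-form `ω₁` with `i∂∂̄ω₁ = 0`. -/
theorem stmt_18 (Ω11 Ω22 : Type*)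
    [AddCommGroup Ω11] [Module ℝ Ω11] [AddCommGroup Ω22] [Module ℝ Ω22]
    (ddbar : Ω11 →ₗ[ℝ] Ω22)
    (integralWedge : Ω11 →ₗ[ℝ] Ω22 →ₗ[ℝ] ℝ)
    (Positive : Ω11 → Prop) (AEPositive : Ω22 → Prop)
    (hstokes : ∀ a b : Ω11, integralWedge a (ddbar b) = integralWedge b (ddbar a))
    (hposint : ∀ a T, Positive a → AEPositive T → 0 < integralWedge a T)
    (ω' : Ω11) (hω' : AEPositive (ddbar ω')) :
    ¬ ∃ ω₁ : Ω11, Positive ω₁ ∧ ddbar ω₁ = 0 := by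
  rintro ⟨ω₁, hpos, hflat⟩
  have h := hposint ω₁ (ddbar ω') hpos hω'
  rw [hstokes ω₁ ω', hflat] at h
  simp at h
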